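/- arXiv:2008.03803 — 2 statements merged into one kernel-verified Lean document; each statement's English description precedes it below -/
import Mathlib

section
/- The matrix ring M_2(F_2) has exactly four maximal subrings: the unique subring isomorphic to F_4, and the three stabilizers of the lines in F_2 × F_2 (i.e., for each one-dimensional subspace L of F_2², the set of matrices A with A·L ⊆ L). -/
/-!
Let `ω` be a root of `X² + X + 1` in `M₂(𝔽₂)`; its centralizer `𝔽₂[ω]` is a copy of `𝔽₄`, and `ω`
fixes no line. Let `M` be a proper subring. If `M` contains some `N ≠ 0` with `N² = 0`, then
`NyN = 0` for every `y ∈ M`: otherwise `N, Ny, yN, yNy` are matrix units for a basis adapted to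
`N` and span `M₂(𝔽₂)`. Hence `M` fixes the line `ker N`. Otherwise `M` is reduced. As `x + x²`
squares to zero for every `x ∉ {ω, ω²}`, either `ω ∈ M` and then `M = 𝔽₂[ω]` (an idempotent
`e ∉ {0, 1}` in `M` would give the nonzero square-zero element `eω(1 + e)`), or every element
of `M` is idempotent; then `M` is commutative and lies in the commutant of an idempotent, which
fixes a line. The same dichotomy shows that the four subrings are maximal, and a subring
isomorphic to `𝔽₄` is reduced without being Boolean, hence equals `𝔽₂[ω]`.
-/

open Matrix Module Submodule

section Stabilizer

variable {K n : Type*} [CommRing K] [Fintype n]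

def Submodule.matrixStabilizer (L : Submodule K (n → K)) : NonUnitalSubring (Matrix n n K) where
  carrier := {A | ∀ v ∈ L, A *ᵥ v ∈ L}
  zero_mem' _ _ := by simp
  add_mem' hA hB v hv := by simpa [add_mulVec] using L.add_mem (hA v hv) (hB v hv)
  neg_mem' hA v hv := by simpa [neg_mulVec] using L.neg_mem (hA v hv)
  mul_mem' hA hB v hv := by simpa [← mulVec_mulVec] using hA _ (hB v hv)

theorem Submodule.mem_matrixStabilizer_span_singleton {v : n → K} {A : Matrix n n K} :
    A ∈ (K ∙ v).matrixStabilizer ↔ A *ᵥ v ∈ K ∙ v := by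
  refine ⟨fun h => h v (mem_span_singleton_self v), fun h w hw => ?_⟩
  obtain ⟨c, rfl⟩ := mem_span_singleton.mp hw
  rw [mulVec_smul]
  exact smul_mem _ c h

end Stabilizer

theorem Submodule.mem_span_singleton_zmod_two {V : Type*} [AddCommGroup V] [Module (ZMod 2) V]
    {v w : V} : w ∈ ZMod 2 ∙ v ↔ w = 0 ∨ w = v := by
  rw [mem_span_singleton]
  constructor
  · rintro ⟨c, rfl⟩
    obtain rfl | rfl : c = 0 ∨ c = 1 := by revert c; decide
    exacts [.inl (zero_smul _ _), .inr (one_smul _ _)]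
  · rintro (rfl | rfl)
    exacts [⟨0, zero_smul _ _⟩, ⟨1, one_smul _ _⟩]

theorem Submodule.exists_eq_span_singleton_of_finrank_eq_one {K V : Type*} [DivisionRing K]
    [AddCommGroup V] [Module K V] {L : Submodule K V} (h : finrank K L = 1) :
    ∃ v ≠ 0, L = K ∙ v := by
  obtain ⟨v, hv, hv0⟩ := L.ne_bot_iff.mp (isAtom_iff_finrank_eq_one.mpr h).1
  exact ⟨v, hv0, eq_span_singleton_of_mem_of_finrank_eq_one h hv hv0⟩

namespace M2F2

-- The `Decidable` instances of the statements proved by `decide` below are large.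
set_option synthInstance.maxSize 1000

local notation "𝕄" => Matrix (Fin 2) (Fin 2) (ZMod 2)

def ω : 𝕄 := !![0, 1; 1, 1]

theorem ω_mul_ω_mul_ω : ω * (ω * ω) = 1 := by decide

theorem ω_sq_mul_ω_sq : ω * ω * (ω * ω) = ω := by decide

def F₄ : Subring 𝕄 := Subring.centralizer {ω}

theorem mem_F₄_iff {x : 𝕄} : x ∈ F₄ ↔ x = 0 ∨ x = 1 ∨ x = ω ∨ x = ω * ω := by
  simp only [F₄, Subring.mem_centralizer_iff, Set.mem_singleton_iff, forall_eq]
  revert x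
  decide

theorem F₄_mul_comm {x y : 𝕄} (hx : x ∈ F₄) (hy : y ∈ F₄) : x * y = y * x := by
  rw [mem_F₄_iff] at hx hy
  rcases hx with rfl | rfl | rfl | rfl <;> rcases hy with rfl | rfl | rfl | rfl <;> decide

theorem F₄_eq_zero_or_eq_zero_of_mul_eq_zero {x y : 𝕄} (hx : x ∈ F₄) (hy : y ∈ F₄)
    (h : x * y = 0) : x = 0 ∨ y = 0 := by
  rw [mem_F₄_iff] at hx hy
  revert h
  rcases hx with rfl | rfl | rfl | rfl <;> rcases hy with rfl | rfl | rfl | rfl <;> decide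

theorem nat_card_F₄ : Nat.card F₄ = 4 := by
  rw [Nat.card_congr (Equiv.subtypeEquivRight fun x => (mem_F₄_iff (x := x)).trans
    (by simp : _ ↔ x ∈ ({0, 1, ω, ω * ω} : Finset 𝕄))), Nat.card_eq_finsetCard]
  decide

theorem nat_card_galoisField : Nat.card (GaloisField 2 2) = 4 :=
  GaloisField.card 2 2 two_ne_zero

theorem nonempty_ringEquiv_F₄ : Nonempty (F₄.toNonUnitalSubring ≃+* GaloisField 2 2) := by
  classical
  let : CommRing F₄ :=
    { F₄.toRing with mul_comm := fun x y => Subtype.ext (F₄_mul_comm x.2 y.2) }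
  have : NoZeroDivisors F₄ := ⟨fun {x y} h =>
    (F₄_eq_zero_or_eq_zero_of_mul_eq_zero x.2 y.2 congr($h.1)).imp Subtype.ext Subtype.ext⟩
  have : Nontrivial F₄ := ⟨0, 1, fun h => zero_ne_one congr($h.1)⟩
  have : IsDomain F₄ := NoZeroDivisors.to_isDomain _
  let := Fintype.ofFinite F₄
  let := Fintype.ofFinite (GaloisField 2 2)
  let : Field F₄ := Fintype.fieldOfDomain F₄
  exact ⟨FiniteField.ringEquivOfCardEq (K := F₄) (by
    rw [← Nat.card_eq_fintype_card, ← Nat.card_eq_fintype_card, nat_card_F₄,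
      nat_card_galoisField])⟩

-- Cayley–Hamilton: `x² = (tr x) x + det x`, and `tr x = det x = 1` only for `x = ω, ω²`.
theorem add_mul_self_mul_self_eq_zero (x : 𝕄) (hω : x ≠ ω) (hω' : x ≠ ω * ω) :
    (x + x * x) * (x + x * x) = 0 := by
  revert x
  decide

theorem mul_self_eq_zero_and_ne_zero_of_isIdempotentElem (e : 𝕄) (he : IsIdempotentElem e)
    (h0 : e ≠ 0) (h1 : e ≠ 1) :
    (e * ω + e * ω * e) * (e * ω + e * ω * e) = 0 ∧ e * ω + e * ω * e ≠ 0 := by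
  revert e
  unfold IsIdempotentElem
  decide

theorem ω_notMem_matrixStabilizer (v : Fin 2 → ZMod 2) (hv : v ≠ 0) :
    ω ∉ (ZMod 2 ∙ v).matrixStabilizer := by
  rw [mem_matrixStabilizer_span_singleton, mem_span_singleton_zmod_two]
  revert v
  decide

theorem exists_line_of_mul_self_eq_zero (N : 𝕄) (hN : N * N = 0) (hN0 : N ≠ 0) :
    ∃ v ≠ 0, ∀ y, y ∈ (ZMod 2 ∙ v).matrixStabilizer ↔ N * y * N = 0 := by
  simp only [mem_matrixStabilizer_span_singleton, mem_span_singleton_zmod_two]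
  revert N
  decide

theorem exists_mul_self_eq_zero_of_ne_zero (v : Fin 2 → ZMod 2) (hv : v ≠ 0) :
    ∃ N : 𝕄, N * N = 0 ∧ ∀ y, y ∈ (ZMod 2 ∙ v).matrixStabilizer ↔ N * y * N = 0 := by
  simp only [mem_matrixStabilizer_span_singleton, mem_span_singleton_zmod_two]
  revert v
  decide

theorem exists_line_of_isIdempotentElem (e : 𝕄) (he : IsIdempotentElem e) (h0 : e ≠ 0)
    (h1 : e ≠ 1) : ∃ v ≠ 0, ∀ f, Commute f e → f ∈ (ZMod 2 ∙ v).matrixStabilizer := by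
  simp only [mem_matrixStabilizer_span_singleton, mem_span_singleton_zmod_two, commute_iff_eq]
  unfold IsIdempotentElem at he
  revert e
  decide

theorem linearIndependent_of_mul_self_eq_zero {N y : 𝕄} (hN : N * N = 0)
    (hNyN : N * y * N ≠ 0) :
    LinearIndependent (ZMod 2) ![N, N * y, y * N, y * N * y] := by
  have key : ∀ N y : 𝕄, N * N = 0 → N * y * N ≠ 0 → ∀ a b c d : ZMod 2,
      a • N + b • (N * y) + c • (y * N) + d • (y * N * y) = 0 →
        a = 0 ∧ b = 0 ∧ c = 0 ∧ d = 0 := by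
    decide
  rw [Fintype.linearIndependent_iff]
  intro g hg i
  rw [Fin.sum_univ_four] at hg
  obtain ⟨h0, h1, h2, h3⟩ := key N y hN hNyN _ _ _ _ hg
  fin_cases i <;> assumption

section Subrings

variable {M : NonUnitalSubring 𝕄}

theorem F₄_le_of_ω_mem (h : ω ∈ M) : F₄.toNonUnitalSubring ≤ M := by
  intro x hx
  rcases mem_F₄_iff.mp hx with rfl | rfl | rfl | rfl
  · exact M.zero_mem
  · rw [← ω_mul_ω_mul_ω]
    exact M.mul_mem h (M.mul_mem h h)
  · exact h
  · exact M.mul_mem h h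

theorem eq_top_of_mul_self_eq_zero {N y : 𝕄} (hN : N ∈ M) (hy : y ∈ M) (hNN : N * N = 0)
    (hNyN : N * y * N ≠ 0) : M = ⊤ := by
  have hspan : span (ZMod 2) (Set.range ![N, N * y, y * N, y * N * y]) = ⊤ :=
    (linearIndependent_of_mul_self_eq_zero hNN hNyN).span_eq_top_of_card_eq_finrank'
      (by simp [finrank_matrix])
  have hle : span (ZMod 2) (Set.range ![N, N * y, y * N, y * N * y]) ≤
      AddSubgroup.toZModSubmodule 2 M.toAddSubgroup := by
    rw [span_le, Set.range_subset_iff]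
    intro i
    fin_cases i
    exacts [hN, M.mul_mem hN hy, M.mul_mem hy hN, M.mul_mem (M.mul_mem hy hN) hy]
  exact eq_top_iff.mpr fun x _ => hle (hspan ▸ mem_top)

theorem mul_mul_eq_zero_of_mul_self_eq_zero (hM : M ≠ ⊤) {N y : 𝕄} (hN : N ∈ M)
    (hNN : N * N = 0) (hy : y ∈ M) : N * y * N = 0 :=
  by_contra fun h => hM (eq_top_of_mul_self_eq_zero hN hy hNN h)

variable (hred : ∀ x ∈ M, x * x = 0 → x = 0)
include hred

theorem isIdempotentElem_of_reduced {x : 𝕄} (hx : x ∈ M) (hω : x ≠ ω)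
    (hω' : x ≠ ω * ω) : IsIdempotentElem x :=
  (CharTwo.add_eq_zero.mp <| hred _ (M.add_mem hx (M.mul_mem hx hx))
    (add_mul_self_mul_self_eq_zero x hω hω')).symm

theorem isIdempotentElem_of_reduced_of_ω_notMem (hω : ω ∉ M) {x : 𝕄} (hx : x ∈ M) :
    IsIdempotentElem x := by
  have hω' : ω * ω ∉ M := fun h => hω (ω_sq_mul_ω_sq ▸ M.mul_mem h h)
  exact isIdempotentElem_of_reduced hred hx (ne_of_mem_of_not_mem hx hω)
    (ne_of_mem_of_not_mem hx hω')

theorem eq_F₄_of_reduced (hω : ω ∈ M) : M = F₄.toNonUnitalSubring := by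
  refine le_antisymm (fun x hx => ?_) (F₄_le_of_ω_mem hω)
  change x ∈ F₄
  rw [mem_F₄_iff]
  by_contra! h
  obtain ⟨h0, h1, h2, h3⟩ := h
  obtain ⟨hsq, hne⟩ := mul_self_eq_zero_and_ne_zero_of_isIdempotentElem x
    (isIdempotentElem_of_reduced hred hx h2 h3) h0 h1
  exact hne (hred _ (M.add_mem (M.mul_mem hx hω) (M.mul_mem (M.mul_mem hx hω) hx)) hsq)

theorem le_matrixStabilizer_of_reduced (hω : ω ∉ M) :
    ∃ v ≠ 0, M ≤ (ZMod 2 ∙ v).matrixStabilizer := by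
  have hidem : ∀ {x}, x ∈ M → IsIdempotentElem x :=
    isIdempotentElem_of_reduced_of_ω_notMem hred hω
  by_cases h : ∃ e ∈ M, e ≠ 0 ∧ e ≠ 1
  · obtain ⟨e, he, h0, h1⟩ := h
    obtain ⟨v, hv, hcomm⟩ := exists_line_of_isIdempotentElem e (hidem he) h0 h1
    refine ⟨v, hv, fun f hf => hcomm f (CharTwo.add_eq_zero.mp ?_)⟩
    exact ((hidem hf).add_iff (hidem he)).mp (hidem (M.add_mem hf he))
  · push Not at h
    refine ⟨![1, 0], by decide, fun x hx => ?_⟩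
    by_cases h0 : x = 0
    · exact h0 ▸ zero_mem _
    · exact h x hx h0 ▸ fun v hv => by simpa using hv

end Subrings

theorem eq_F₄_or_le_matrixStabilizer {M : NonUnitalSubring 𝕄} (hM : M ≠ ⊤) :
    M = F₄.toNonUnitalSubring ∨ ∃ v ≠ 0, M ≤ (ZMod 2 ∙ v).matrixStabilizer := by
  by_cases hred : ∀ x ∈ M, x * x = 0 → x = 0
  · by_cases hω : ω ∈ M
    · exact .inl (eq_F₄_of_reduced hred hω)
    · exact .inr (le_matrixStabilizer_of_reduced hred hω)
  · push Not at hred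
    obtain ⟨N, hN, hNN, hN0⟩ := hred
    obtain ⟨v, hv, hstab⟩ := exists_line_of_mul_self_eq_zero N hNN hN0
    exact .inr ⟨v, hv, fun y hy =>
      (hstab y).mpr (mul_mul_eq_zero_of_mul_self_eq_zero hM hN hNN hy)⟩

theorem isCoatom_matrixStabilizer {v : Fin 2 → ZMod 2} (hv : v ≠ 0) :
    IsCoatom (ZMod 2 ∙ v).matrixStabilizer := by
  obtain ⟨N, hNN, hstab⟩ := exists_mul_self_eq_zero_of_ne_zero v hv
  have hN : N ∈ (ZMod 2 ∙ v).matrixStabilizer := (hstab N).mpr (by rw [hNN, zero_mul])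
  refine ⟨fun h => ω_notMem_matrixStabilizer v hv (h ▸ NonUnitalSubring.mem_top ω),
    fun M hlt => by_contra fun hM => hlt.not_ge fun y hy => (hstab y).mpr ?_⟩
  exact mul_mul_eq_zero_of_mul_self_eq_zero hM (hlt.le hN) hNN hy

theorem isCoatom_F₄ : IsCoatom F₄.toNonUnitalSubring := by
  refine ⟨fun h => ?_, fun M hlt => by_contra fun hM => ?_⟩
  · have : (!![1, 0; 0, 0] : 𝕄) ∈ F₄.toNonUnitalSubring := h ▸ NonUnitalSubring.mem_top _
    change _ ∈ F₄ at this
    rw [mem_F₄_iff] at this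
    revert this
    decide
  · rcases eq_F₄_or_le_matrixStabilizer hM with h | ⟨v, hv, hle⟩
    · exact hlt.ne h.symm
    · exact ω_notMem_matrixStabilizer v hv (hle (hlt.le (mem_F₄_iff.mpr (by simp))))

theorem eq_F₄_of_ringEquiv {M : NonUnitalSubring 𝕄} (f : M ≃+* GaloisField 2 2) :
    M = F₄.toNonUnitalSubring := by
  have hred : ∀ x ∈ M, x * x = 0 → x = 0 := by
    intro x hx h
    have hf : f ⟨x, hx⟩ * f ⟨x, hx⟩ = 0 := by
      rw [← map_mul, map_eq_zero_iff f f.injective]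
      exact Subtype.ext h
    simpa using congr($((map_eq_zero_iff f f.injective).mp (mul_self_eq_zero.mp hf)).1)
  refine eq_F₄_of_reduced hred (by_contra fun hω => ?_)
  have hbool : ∀ u : GaloisField 2 2, u = 0 ∨ u = 1 := fun u => by
    rw [← IsIdempotentElem.iff_eq_zero_or_one, ← f.apply_symm_apply u]
    refine IsIdempotentElem.map (Subtype.ext ?_) f
    exact isIdempotentElem_of_reduced_of_ω_notMem hred hω (f.symm u).2
  classical
  let := Fintype.ofFinite (GaloisField 2 2)
  have hsub : (Finset.univ : Finset (GaloisField 2 2)) ⊆ {0, 1} := fun u _ => by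
    simpa using hbool u
  have := (Finset.card_le_card hsub).trans Finset.card_le_two
  rw [Finset.card_univ, ← Nat.card_eq_fintype_card, nat_card_galoisField] at this
  omega

end M2F2

open M2F2

/-- `M₂(F₂)` has exactly four maximal subrings: the unique subring isomorphic to `F₄`,
and the three stabilizers of the lines (one-dimensional subspaces) of `F₂²`. -/
theorem maximal_subrings_of_M2F2 :
    (∀ M N : NonUnitalSubring (Matrix (Fin 2) (Fin 2) (ZMod 2)),
        Nonempty (M ≃+* GaloisField 2 2) → Nonempty (N ≃+* GaloisField 2 2) → M = N) ∧
    (∀ M : NonUnitalSubring (Matrix (Fin 2) (Fin 2) (ZMod 2)),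
      (M ≠ ⊤ ∧ ∀ N, M < N → N = ⊤) ↔
        (Nonempty (M ≃+* GaloisField 2 2) ∨
          ∃ L : Submodule (ZMod 2) (Fin 2 → ZMod 2), Module.finrank (ZMod 2) L = 1 ∧
            (M : Set (Matrix (Fin 2) (Fin 2) (ZMod 2))) = {A | ∀ v ∈ L, A.mulVec v ∈ L})) := by
  refine ⟨fun M N ⟨f⟩ ⟨g⟩ => (eq_F₄_of_ringEquiv f).trans (eq_F₄_of_ringEquiv g).symm,
    fun M => ?_⟩
  change IsCoatom M ↔ _
  constructor
  · intro hM
    rcases eq_F₄_or_le_matrixStabilizer hM.1 with rfl | ⟨v, hv, hle⟩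
    · exact .inl nonempty_ringEquiv_F₄
    · refine .inr ⟨ZMod 2 ∙ v, finrank_span_singleton hv, ?_⟩
      rw [← (hM.le_iff_eq (isCoatom_matrixStabilizer hv).1).mp hle]
      rfl
  · rintro (⟨⟨f⟩⟩ | ⟨L, hL, hML⟩)
    · exact eq_F₄_of_ringEquiv f ▸ isCoatom_F₄
    · obtain ⟨v, hv, rfl⟩ := exists_eq_span_singleton_of_finrank_eq_one hL
      have hM : M = (ZMod 2 ∙ v).matrixStabilizer := SetLike.coe_injective hML
      exact hM ▸ isCoatom_matrixStabilizer hv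
end

section
/- For every prime p > 2, the ring F_p × F_p is generated as a ring by the single element (1, 2); consequently F_p × F_p is not a union of proper subrings when p > 2. -/
/-- `R` is the union of finitely many proper subrings (subrings need not contain 1). -/
def Coverable (R : Type*) [NonUnitalRing R] : Prop :=
  ∃ (n : ℕ) (c : Fin n → NonUnitalSubring R), (∀ i, c i ≠ ⊤) ∧ ∀ x : R, ∃ i, x ∈ c i

/-! Since `(1, 2)² - (1, 2) = (0, 2)`, the subring generated by `(1, 2)` contains `(0, 2)` and
hence `(1, 0)`. In `ZMod (2k + 1)` we have `(k + 1) • 2 = 1`, so it also contains `(0, 1)`, and the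
two idempotents `(1, 0)`, `(0, 1)` generate `ZMod n × ZMod n` additively. A ring generated by one
element is not a union of proper subrings, since the subring containing the generator is everything. -/

theorem not_coverable_of_closure_singleton_eq_top {R : Type*} [NonUnitalRing R] {x : R}
    (h : NonUnitalSubring.closure {x} = ⊤) : ¬ Coverable R := by
  rintro ⟨n, c, hproper, hcover⟩
  obtain ⟨i, hx⟩ := hcover x
  exact hproper i (top_le_iff.mp (h ▸ NonUnitalSubring.closure_le.mpr (by simpa using hx)))

section OneTwo

variable {R : Type*} [Ring R]

theorem Prod.zero_two_mem_closure_one_two :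
    ((0, 2) : R × R) ∈ NonUnitalSubring.closure {((1, 2) : R × R)} := by
  have hx := NonUnitalSubring.subset_closure (Set.mem_singleton ((1, 2) : R × R))
  have hsq : ((1, 2) : R × R) * (1, 2) - (1, 2) = (0, 2) := by
    ext <;> norm_num
  exact hsq ▸ sub_mem (mul_mem hx hx) hx

theorem Prod.one_zero_mem_closure_one_two :
    ((1, 0) : R × R) ∈ NonUnitalSubring.closure {((1, 2) : R × R)} := by
  have hx := NonUnitalSubring.subset_closure (Set.mem_singleton ((1, 2) : R × R))
  simpa using sub_mem hx Prod.zero_two_mem_closure_one_two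

end OneTwo

namespace ZMod

theorem nonUnitalSubring_eq_top_of_one_zero_mem_of_zero_one_mem {m n : ℕ}
    {S : NonUnitalSubring (ZMod m × ZMod n)} (h₁₀ : ((1, 0) : ZMod m × ZMod n) ∈ S)
    (h₀₁ : ((0, 1) : ZMod m × ZMod n) ∈ S) : S = ⊤ := by
  refine eq_top_iff.mpr fun ⟨a, b⟩ _ => ?_
  have hab : ((a, b) : ZMod m × ZMod n) = (a.cast : ℤ) • (1, 0) + (b.cast : ℤ) • (0, 1) := by
    ext <;> simp [ZMod.intCast_cast]
  exact hab ▸ add_mem (zsmul_mem h₁₀ _) (zsmul_mem h₀₁ _)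

theorem closure_one_two_eq_top {n : ℕ} (hn : Odd n) :
    NonUnitalSubring.closure {((1, 2) : ZMod n × ZMod n)} = ⊤ := by
  obtain ⟨k, rfl⟩ := hn
  have hhalf : (k + 1) • ((0, 2) : ZMod (2 * k + 1) × ZMod (2 * k + 1)) = (0, 1) := by
    have h : ((2 * k + 1 : ℕ) : ZMod (2 * k + 1)) = 0 := ZMod.natCast_self _
    ext <;> simp only [Prod.smul_mk, smul_zero, nsmul_eq_mul]
    push_cast at h ⊢
    linear_combination h
  exact nonUnitalSubring_eq_top_of_one_zero_mem_of_zero_one_mem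
    Prod.one_zero_mem_closure_one_two (hhalf ▸ nsmul_mem Prod.zero_two_mem_closure_one_two _)

end ZMod

/-- For every prime `p > 2`, the ring `F_p × F_p` is generated as a (non-unital) ring by
the single element `(1, 2)`; consequently it is not coverable. -/
theorem FpxFp_generated_by_one_two (p : ℕ) (hp : p.Prime) (hp2 : 2 < p) :
    NonUnitalSubring.closure {((1, 2) : ZMod p × ZMod p)} = ⊤ ∧
    ¬ Coverable (ZMod p × ZMod p) := by
  have htop := ZMod.closure_one_two_eq_top (hp.odd_of_ne_two hp2.ne')
  exact ⟨htop, not_coverable_of_closure_singleton_eq_top htop⟩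
end
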